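/- No time-scaling identity among distinct φ-functions: if g ∈ (0,1] and real constants A₃, A₄ satisfy φ_k(g z) = A₃ φ_3(z) + A₄ φ_4(z) for all z ∈ ℂ, for some k ∈ {3, 4}, then g = 1 (and accordingly (A₃,A₄) = (1,0) or (0,1)). -/
import Mathlib

noncomputable def phi (k : ℕ) (z : ℂ) : ℂ := ∑' j : ℕ, z ^ j / (Nat.factorial (j + k) : ℂ)

lemma phi_summable (k : ℕ) (w : ℂ) :
    Summable (fun j : ℕ => w ^ j / (Nat.factorial (j + k) : ℂ)) := by
  apply Summable.of_norm
  refine Summable.of_nonneg_of_le (fun j => norm_nonneg _) (fun j => ?_)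
    (Real.summable_pow_div_factorial ‖w‖)
  rw [norm_div, norm_pow, Complex.norm_natCast]
  apply div_le_div_of_nonneg_left (pow_nonneg (norm_nonneg w) j)
  · exact_mod_cast Nat.factorial_pos j
  · exact_mod_cast Nat.factorial_le (Nat.le_add_right j k)

open FormalMultilinearSeries in
lemma coeff_eq_zero (c : ℕ → ℂ) (hsum : Summable fun n => ‖c n‖)
    (hz : ∀ z : ℂ, ∑' n : ℕ, c n * z ^ n = 0) : ∀ n, c n = 0 := by
  set p := ofScalars ℂ c with hp
  have hcoeff : ∀ n, p.coeff n = c n := fun n => by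
    have : p.coeff n = p n (fun _ => 1) := rfl
    rw [this, hp, ofScalars_apply_eq]
    simp
  have hpos : 0 < p.radius := by
    refine lt_of_lt_of_le ?_ (p.le_radius_of_summable_norm (r := 1) ?_)
    · norm_num
    · simpa [hp, ofScalars_norm, hcoeff] using hsum
  have hsumeq : ∀ z, p.sum z = 0 := by
    intro z
    rw [FormalMultilinearSeries.sum]
    simpa [hcoeff, mul_comm] using hz z
  have h0 : HasFPowerSeriesAt 0 p 0 := by
    refine (p.hasFPowerSeriesOnBall hpos).hasFPowerSeriesAt.congr ?_
    exact Filter.Eventually.of_forall (fun z => hsumeq z)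
  intro n
  have := h0.apply_eq_zero n 1
  simpa [hcoeff] using this

theorem no_time_scaling (g : ℝ) (hg0 : 0 < g) (hg1 : g ≤ 1) (A₃ A₄ : ℝ)
    (k : ℕ) (hk : k = 3 ∨ k = 4)
    (h : ∀ z : ℂ, phi k ((g : ℂ) * z) = (A₃ : ℂ) * phi 3 z + (A₄ : ℂ) * phi 4 z) :
    g = 1 ∧ (k = 3 → A₃ = 1 ∧ A₄ = 0) ∧ (k = 4 → A₃ = 0 ∧ A₄ = 1) := by
  set c : ℕ → ℂ := fun j => (g:ℂ) ^ j / (Nat.factorial (j + k) : ℂ)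
    - (A₃:ℂ) / (Nat.factorial (j + 3) : ℂ) - (A₄:ℂ) / (Nat.factorial (j + 4) : ℂ) with hcdef
  have hcs : Summable c := by
    have s1 := phi_summable k (g:ℂ)
    have s2 := (phi_summable 3 (1:ℂ)).mul_left (A₃:ℂ)
    have s3 := (phi_summable 4 (1:ℂ)).mul_left (A₄:ℂ)
    refine ((s1.sub s2).sub s3).congr fun j => ?_
    simp [hcdef, one_pow, div_eq_mul_inv]
  have hnorm : Summable fun n => ‖c n‖ := summable_norm_iff.mpr hcs
  have hz : ∀ z : ℂ, ∑' n : ℕ, c n * z ^ n = 0 := by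
    intro z
    have hS1 : Summable fun j : ℕ => ((g:ℂ) * z) ^ j / (Nat.factorial (j + k) : ℂ) :=
      phi_summable k _
    have hS2 : Summable fun j : ℕ => (A₃:ℂ) * (z ^ j / (Nat.factorial (j + 3) : ℂ)) :=
      (phi_summable 3 z).mul_left _
    have hS3 : Summable fun j : ℕ => (A₄:ℂ) * (z ^ j / (Nat.factorial (j + 4) : ℂ)) :=
      (phi_summable 4 z).mul_left _
    have heq : (fun n : ℕ => c n * z ^ n)
        = fun j : ℕ => ((g:ℂ) * z) ^ j / (Nat.factorial (j + k) : ℂ)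
          - ((A₃:ℂ) * (z ^ j / (Nat.factorial (j + 3) : ℂ))
            + (A₄:ℂ) * (z ^ j / (Nat.factorial (j + 4) : ℂ))) := by
      funext j
      rw [hcdef, mul_pow]
      ring
    rw [heq, Summable.tsum_sub hS1 (hS2.add hS3), Summable.tsum_add hS2 hS3, tsum_mul_left, tsum_mul_left]
    have := h z
    simp only [phi] at this
    rw [this]
    ring
  have hc := coeff_eq_zero c hnorm hz
  obtain rfl | rfl := hk
  · -- k = 3
    have e0 : (1:ℂ)/6 - (A₃:ℂ)/6 - (A₄:ℂ)/24 = 0 := by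
      have := hc 0; norm_num [hcdef, Nat.factorial] at this; linear_combination this
    have e1 : (g:ℂ)/24 - (A₃:ℂ)/24 - (A₄:ℂ)/120 = 0 := by
      have := hc 1; norm_num [hcdef, Nat.factorial] at this; linear_combination this
    have e2 : (g:ℂ)^2/120 - (A₃:ℂ)/120 - (A₄:ℂ)/720 = 0 := by
      have := hc 2; norm_num [hcdef, Nat.factorial] at this; linear_combination this
    have e3 : (g:ℂ)^3/720 - (A₃:ℂ)/720 - (A₄:ℂ)/5040 = 0 := by
      have := hc 3; norm_num [hcdef, Nat.factorial] at this; linear_combination this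
    have hg : (g:ℂ) = 1 := by
      linear_combination (-(9:ℂ)/2) * (5040*e3 - 720*e2 - 120*e1 + 24*e0)
        + ((21*(g:ℂ) + 17)/4) * (720*e2 - 240*e1 + 24*e0)
    have ha : (A₃:ℂ) = 1 := by linear_combination -(120*e1 - 24*e0) + 5*hg
    have hb : (A₄:ℂ) = 0 := by linear_combination (-24:ℂ)*e0 - 4*ha
    refine ⟨by exact_mod_cast hg, fun _ => ⟨by exact_mod_cast ha, by exact_mod_cast hb⟩,
      fun h4 => absurd h4 (by norm_num)⟩
  · -- k = 4
    have e0 : (1:ℂ)/24 - (A₃:ℂ)/6 - (A₄:ℂ)/24 = 0 := by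
      have := hc 0; norm_num [hcdef, Nat.factorial] at this; linear_combination this
    have e1 : (g:ℂ)/120 - (A₃:ℂ)/24 - (A₄:ℂ)/120 = 0 := by
      have := hc 1; norm_num [hcdef, Nat.factorial] at this; linear_combination this
    have e2 : (g:ℂ)^2/720 - (A₃:ℂ)/120 - (A₄:ℂ)/720 = 0 := by
      have := hc 2; norm_num [hcdef, Nat.factorial] at this; linear_combination this
    have hsq : ((g:ℂ) - 1)^2 = 0 := by
      linear_combination 720*e2 - 240*e1 + 24*e0
    have hg : (g:ℂ) = 1 := by
      have := sq_eq_zero_iff.mp hsq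
      linear_combination this
    have ha : (A₃:ℂ) = 0 := by linear_combination -(120*e1 - 24*e0) + hg
    have hb : (A₄:ℂ) = 1 := by linear_combination (-24:ℂ)*e0 - 4*ha
    exact ⟨by exact_mod_cast hg, fun h3 => absurd h3 (by norm_num),
      fun _ => ⟨by exact_mod_cast ha, by exact_mod_cast hb⟩⟩
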